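/- Let L ≥ 6 and let D_k be an (L^k, k)-connected component of F_k in a hierarchical chunk decomposition of an error E. Then diam(D_k) ≤ L^k. -/
import Mathlib


/-- Level-`k` chunks of the hierarchical decomposition (parameter `L`): a level-0 chunk is a
single error site, and a level-`(k+1)` chunk is a disjoint union of two level-`k` chunks whose
diameter is at most `L^(k+1)/2` (stated as `2 * |x - y| ≤ L^(k+1)`). -/
inductive IsChunk (L : ℤ) : ℕ → Finset ℤ → Prop where
  | zero (x : ℤ) : IsChunk L 0 {x}
  | succ (k : ℕ) (C₁ C₂ : Finset ℤ) : IsChunk L k C₁ → IsChunk L k C₂ → Disjoint C₁ C₂ →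
      (∀ x ∈ C₁ ∪ C₂, ∀ y ∈ C₁ ∪ C₂, 2 * |x - y| ≤ L ^ (k + 1)) →
      IsChunk L (k + 1) (C₁ ∪ C₂)

/-- `E_k`: the union of all level-`k` chunks contained in the error `E`. -/
def levelSet (L : ℤ) (E : Finset ℤ) (k : ℕ) : Set ℤ :=
  {x | ∃ C : Finset ℤ, IsChunk L k C ∧ ↑C ⊆ (E : Set ℤ) ∧ x ∈ C}

/-- `F_k := E_k \ E_{k+1}`, the sites of the error appearing at level `k` of the hierarchy
but not at the next level. -/
def Fset (L : ℤ) (E : Finset ℤ) (k : ℕ) : Set ℤ :=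
  levelSet L E k \ levelSet L E (k + 1)

/-- A finite set `D ⊆ ℤ` is `ℓ`-connected if it admits no partition into two nonempty parts
at distance greater than `ℓ` from each other. -/
def IsLConnected (ℓ : ℤ) (D : Finset ℤ) : Prop :=
  ∀ B₁ B₂ : Finset ℤ, B₁ ∪ B₂ = D → Disjoint B₁ B₂ → B₁.Nonempty → B₂.Nonempty →
    ∃ x ∈ B₁, ∃ y ∈ B₂, |x - y| ≤ ℓ

/-- An `(ℓ,k)`-connected component of `F_k`: a maximal `ℓ`-connected nonempty subset of `F_k`. -/
def IsComponent (L : ℤ) (E : Finset ℤ) (ℓ : ℤ) (k : ℕ) (D : Finset ℤ) : Prop :=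
  ↑D ⊆ Fset L E k ∧ D.Nonempty ∧ IsLConnected ℓ D ∧
    ∀ D' : Finset ℤ, D ⊆ D' → ↑D' ⊆ Fset L E k → IsLConnected ℓ D' → D' = D


lemma chunk_diam {L : ℤ} {k : ℕ} {C : Finset ℤ} (h : IsChunk L k C) :
    ∀ x ∈ C, ∀ y ∈ C, 2 * |x - y| ≤ L ^ k := by
  induction h with
  | zero x =>
    intro a ha b hb
    simp only [Finset.mem_singleton] at ha hb
    subst ha; subst hb; simp
  | succ k C₁ C₂ h₁ h₂ hdisj hdiam ih₁ ih₂ =>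
    exact hdiam

lemma key_aux (L : ℤ) (hL : 6 ≤ L) (E : Finset ℤ) (k : ℕ) (D : Finset ℤ)
    (hsub : ↑D ⊆ Fset L E k) (hconn : IsLConnected (L ^ k) D) :
    ∀ x ∈ D, ∀ y ∈ D, x < y → y - x ≤ L ^ k := by
  intro x hx y hy hxy
  by_contra hgt
  push_neg at hgt
  have hLpos : (0:ℤ) < L := by linarith
  have hpk : (0:ℤ) < L ^ k := pow_pos hLpos k
  have h6 : 6 * L ^ k ≤ L ^ (k + 1) := by
    have : L ^ (k + 1) = L ^ k * L := pow_succ L k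
    nlinarith
  -- split D at x + L^k
  set B₁ := D.filter (fun z => z ≤ x + L ^ k) with hB₁
  set B₂ := D.filter (fun z => ¬ z ≤ x + L ^ k) with hB₂
  have hun : B₁ ∪ B₂ = D := Finset.filter_union_filter_not_eq _ D
  have hdis : Disjoint B₁ B₂ := Finset.disjoint_filter_filter_not D D _
  have hx1 : x ∈ B₁ := Finset.mem_filter.2 ⟨hx, by linarith⟩
  have hy2 : y ∈ B₂ := Finset.mem_filter.2 ⟨hy, by push_neg; linarith⟩
  obtain ⟨p, hp, q, hq, hpq⟩ := hconn B₁ B₂ hun hdis ⟨x, hx1⟩ ⟨y, hy2⟩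
  have hp' := Finset.mem_filter.1 hp
  have hq' := Finset.mem_filter.1 hq
  have hqx1 : L ^ k < q - x := by
    have := hq'.2; push_neg at this; linarith
  have hqp : q - p ≤ L ^ k := by
    have : q - p ≤ |p - q| := by rw [abs_sub_comm]; exact le_abs_self _
    linarith
  have hqx2 : q - x ≤ 2 * L ^ k := by
    have := hp'.2; linarith
  -- chunks containing x and q
  obtain ⟨⟨Cx, hCx, hCxE, hxCx⟩, hxnot⟩ := hsub hx
  obtain ⟨⟨Cq, hCq, hCqE, hqCq⟩, -⟩ := hsub hq'.1
  have hdx := chunk_diam hCx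
  have hdq := chunk_diam hCq
  -- Cx and Cq are disjoint
  have hdisj : Disjoint Cx Cq := by
    rw [Finset.disjoint_left]
    intro u huX huQ
    have h1 : 2 * |u - x| ≤ L ^ k := hdx u huX x hxCx
    have h2 : 2 * |u - q| ≤ L ^ k := hdq u huQ q hqCq
    have h3 : |q - x| ≤ |q - u| + |u - x| := abs_sub_le q u x
    have h4 : q - x ≤ |q - x| := le_abs_self _
    have h5 : |q - u| = |u - q| := abs_sub_comm q u
    linarith
  -- the union is a level (k+1) chunk
  have hchunk : IsChunk L (k + 1) (Cx ∪ Cq) := by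
    refine IsChunk.succ k Cx Cq hCx hCq hdisj ?_
    intro u hu v hv
    have hL1 : L ^ k ≤ L ^ (k + 1) := by linarith
    have hxq : 2 * |x - q| ≤ 4 * L ^ k := by
      rw [abs_sub_comm, abs_of_pos (by linarith : (0:ℤ) < q - x)]
      linarith
    rcases Finset.mem_union.1 hu with hu1 | hu1 <;>
      rcases Finset.mem_union.1 hv with hv1 | hv1
    · have := hdx u hu1 v hv1; linarith
    · have h1 := hdx u hu1 x hxCx
      have h2 := hdq q hqCq v hv1
      have h3 : |u - v| ≤ |u - x| + |x - v| := abs_sub_le u x v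
      have h4 : |x - v| ≤ |x - q| + |q - v| := abs_sub_le x q v
      linarith
    · have h1 := hdq u hu1 q hqCq
      have h2 := hdx x hxCx v hv1
      have h3 : |u - v| ≤ |u - q| + |q - v| := abs_sub_le u q v
      have h4 : |q - v| ≤ |q - x| + |x - v| := abs_sub_le q x v
      have h5 : |q - x| = |x - q| := abs_sub_comm q x
      linarith
    · have := hdq u hu1 v hv1; linarith
  exact hxnot ⟨Cx ∪ Cq, hchunk, by
    rw [Finset.coe_union]; exact Set.union_subset hCxE hCqE,
    Finset.mem_union_left _ hxCx⟩

/-- for `L ≥ 6`, any `(L^k, k)`-connected component `D_k` of `F_k` satisfies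
`diam(D_k) ≤ L^k`. -/
theorem component_diam_le (L : ℤ) (hL : 6 ≤ L) (E : Finset ℤ) (k : ℕ) (D : Finset ℤ)
    (hD : IsComponent L E (L ^ k) k D) :
    ∀ x ∈ D, ∀ y ∈ D, |x - y| ≤ L ^ k := by
  intro x hx y hy
  obtain ⟨hsub, -, hconn, -⟩ := hD
  have hpk : (0:ℤ) < L ^ k := pow_pos (by linarith) k
  rcases lt_trichotomy x y with h | h | h
  · have := key_aux L hL E k D hsub hconn x hx y hy h
    rw [abs_of_nonpos (by linarith)]
    linarith
  · subst h; simp; linarith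
  · have := key_aux L hL E k D hsub hconn y hy x hx h
    rw [abs_of_nonneg (by linarith)]
    linarith
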